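/- There exists a constant C₀ > 0 depending only on the integer n ≥ 3 with the following property. Let (X,d) be a compact metric space equipped with a finite Borel measure μ such that: (i) for every x ∈ X, μ(B(x,ρ))/ρⁿ → ω_n as ρ → 0⁺; (ii) for every x ∈ X the function ρ ↦ μ(B(x,ρ)) is continuous on (0,∞); (iii) X is geodesic, i.e. for all a,b ∈ X there exists γ : [0, d(a,b)] → X with γ(0) = a, γ(d(a,b)) = b and d(γ(s), γ(t)) = |s − t| for all s,t ∈ [0, d(a,b)]; (iv) there are constants A > 0, B ≥ 0 and a measurable function R : X → [0,∞) such that the (A,B,R)-Sobolev inequality holds at every x ∈ X up to scale 1. Set κ₀ = min{(2ⁿ(48A + 4B))^{−n/2}, ω_n/2}. If diam(X) ≥ C₀ (1 + μ(X)/κ₀), then diam(X) ≤ C₀ κ₀^{−1} ∫_X R^{(n−1)/2} dμ. -/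

import Mathlib

/-!
Around every point `x` there is a radius `r ≤ 1` with
`κ₀ r ≤ μ(B(x,r)) + ∫_{B(x,r)} R^{(n-1)/2}`. Either `r = 1` works, or, since
`μ(B(x,ρ)) ≈ ωₙ ρⁿ > κ₀ ρⁿ` for small `ρ`, there is a dyadic scale `s` with
`μ(B(x,s)) ≤ κ₀ sⁿ` and `μ(B(x,s/2)) ≥ κ₀ (s/2)ⁿ`. Testing the Sobolev inequality with `v_{x,s}`
and bounding `∫ R v²` by Hölder's inequality, `∫_{B(x,s)} R^{(n-1)/2} < κ₀ s` would make the
right-hand side at most `(5A + B) κ₀ sⁿ`, too small for the left-hand side by the choice of `κ₀`.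

A geodesic between two points at distance `diam X` is covered by such balls centred on it; a
Vitali subfamily consists of disjoint balls whose radii add up to at least `diam X / 8`, so
`κ₀ diam X / 8 ≤ μ(X) + ∫ R^{(n-1)/2}`, and the lower bound on the diameter absorbs `μ(X)`.
-/

open MeasureTheory Metric Set Filter

/-- The Lebesgue volume of the unit ball in `ℝⁿ`. -/
noncomputable def unitBallVol (n : ℕ) : ℝ :=
  (volume (Metric.ball (0 : EuclideanSpace ℝ (Fin n)) 1)).toReal

/-- The `(A,B,R)`-Sobolev inequality holds at `x` up to scale `r`:
for every `s ∈ (0,r]`, testing with the cutoff `v_{x,s}(y) = max (s - d(x,y)) 0`,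
`(∫ v^{2n/(n-2)})^{(n-2)/n} ≤ A (4 μ(B(x,s)) + ∫ R v²) + B ∫ v²`. -/
noncomputable def SobolevAt {X : Type*} [MetricSpace X] [MeasurableSpace X]
    (μ : Measure X) (n : ℕ) (A B : ℝ) (R : X → ℝ) (x : X) (r : ℝ) : Prop :=
  ∀ s ∈ Set.Ioc (0 : ℝ) r,
    (∫⁻ y, ENNReal.ofReal (max (s - dist x y) 0) ^ ((2 * (n : ℝ)) / ((n : ℝ) - 2)) ∂μ)
        ^ (((n : ℝ) - 2) / (n : ℝ))
      ≤ ENNReal.ofReal A * (4 * μ (Metric.ball x s)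
            + ∫⁻ y, ENNReal.ofReal (R y)
                * ENNReal.ofReal (max (s - dist x y) 0) ^ (2 : ℝ) ∂μ)
        + ENNReal.ofReal B * ∫⁻ y, ENNReal.ofReal (max (s - dist x y) 0) ^ (2 : ℝ) ∂μ

open scoped ENNReal Topology

theorem mul_rpow_mul_mul_pow_rpow {κ s : ℝ} (hκ : 0 < κ) (hs : 0 < s) (n : ℕ) (a : ℝ) :
    (κ * s) ^ a * (κ * s ^ n) ^ (1 - a) = κ * s ^ (n - (n - 1) * a) := by
  rw [Real.mul_rpow hκ.le hs.le, Real.mul_rpow hκ.le (by positivity), ← Real.rpow_natCast,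
    ← Real.rpow_mul hs.le]
  calc _ = κ ^ (a + (1 - a)) * s ^ (a + n * (1 - a)) := by
        rw [Real.rpow_add hκ, Real.rpow_add hs]; ring
    _ = _ := by rw [add_sub_cancel, Real.rpow_one]; ring_nf

theorem rpow_mul_mul_pow_rpow {κ t q e : ℝ} (hκ : 0 < κ) (ht : 0 < t) {n : ℕ}
    (hqe : q * e = 2) (hne : n * e = n - 2) :
    (t ^ q * (κ * t ^ n)) ^ e = κ ^ e * t ^ n := by
  rw [Real.mul_rpow (by positivity) (by positivity), Real.mul_rpow hκ.le (by positivity),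
    ← Real.rpow_natCast, ← Real.rpow_mul ht.le, ← Real.rpow_mul ht.le, hqe, hne]
  calc _ = κ ^ e * t ^ ((2 : ℝ) + (n - 2)) := by rw [Real.rpow_add ht]; ring
    _ = _ := by ring_nf

theorem two_pow_mul_rpow_lt_one {n : ℕ} (hn : 0 < n) {A B κ : ℝ} (hA : 0 < A) (hB : 0 ≤ B)
    (hκ : 0 < κ) (hκ' : κ ≤ (2 ^ n * (48 * A + 4 * B)) ^ (-(n : ℝ) / 2)) :
    2 ^ n * (5 * A + B) * κ ^ (2 / n : ℝ) < 1 := by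
  have hc : 0 < (2 : ℝ) ^ n * (48 * A + 4 * B) := by positivity
  have hκc : κ ^ (2 / n : ℝ) ≤ (2 ^ n * (48 * A + 4 * B))⁻¹ := by
    calc κ ^ (2 / n : ℝ)
        ≤ ((2 ^ n * (48 * A + 4 * B)) ^ (-(n : ℝ) / 2)) ^ (2 / n : ℝ) := by gcongr
      _ = (2 ^ n * (48 * A + 4 * B))⁻¹ := by
          rw [← Real.rpow_mul hc.le, ← Real.rpow_neg_one]
          congr 1
          field_simp
  calc 2 ^ n * (5 * A + B) * κ ^ (2 / n : ℝ)
      ≤ 2 ^ n * (5 * A + B) * (2 ^ n * (48 * A + 4 * B))⁻¹ := by gcongr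
    _ < 1 := by
        rw [← div_eq_mul_inv, div_lt_one hc]
        have : (0 : ℝ) < 2 ^ n := by positivity
        nlinarith

theorem mul_mul_pow_lt_rpow_mul_half_pow {n : ℕ} (hn : n ≠ 0) {c κ s : ℝ} (hκ : 0 < κ)
    (hs : 0 < s) (hsmall : 2 ^ n * c * κ ^ (2 / n : ℝ) < 1) :
    c * (κ * s ^ n) < κ ^ (((n : ℝ) - 2) / n) * (s / 2) ^ n := by
  set P := κ ^ (((n : ℝ) - 2) / n) * s ^ n
  have hκP : κ * s ^ n = κ ^ (2 / n : ℝ) * P := by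
    rw [← mul_assoc, ← Real.rpow_add hκ,
      show 2 / n + ((n : ℝ) - 2) / n = 1 by field_simp; ring, Real.rpow_one]
  have hP : 0 < P := by positivity
  calc c * (κ * s ^ n) = 2 ^ n * c * κ ^ (2 / n : ℝ) * P / 2 ^ n := by rw [hκP]; field_simp
    _ < 1 * P / 2 ^ n := by gcongr
    _ = κ ^ (((n : ℝ) - 2) / n) * (s / 2) ^ n := by rw [div_pow]; ring

theorem setLIntegral_le_rpow_mul_measure_rpow {X : Type*} [MeasurableSpace X] (μ : Measure X)
    {s : Set X} {f : X → ℝ≥0∞} (hf : AEMeasurable f (μ.restrict s)) {p : ℝ}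
    (hp : 1 ≤ p) :
    ∫⁻ y in s, f y ∂μ ≤ (∫⁻ y in s, f y ^ p ∂μ) ^ (1 / p) * μ s ^ (1 - 1 / p) := by
  have h := eLpNorm'_le_eLpNorm'_mul_rpow_measure_univ zero_lt_one hp hf.aestronglyMeasurable
  simpa [eLpNorm'_eq_lintegral_enorm] using h

section Cutoff

variable {X : Type*} [MetricSpace X] {x : X} {s q : ℝ}

noncomputable def cutoff (x : X) (s : ℝ) (y : X) : ℝ≥0∞ :=
  ENNReal.ofReal (max (s - dist x y) 0)

theorem indicator_le_cutoff_rpow (hq : 0 ≤ q) (y : X) :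
    (ball x (s / 2)).indicator (fun _ => ENNReal.ofReal (s / 2) ^ q) y ≤ cutoff x s y ^ q := by
  unfold cutoff
  by_cases hy : y ∈ ball x (s / 2)
  · rw [indicator_of_mem hy]
    rw [mem_ball'] at hy
    gcongr
    exact le_max_of_le_left (by linarith)
  · simp [indicator_of_notMem hy]

theorem cutoff_rpow_le_indicator (hq : 0 < q) (y : X) :
    cutoff x s y ^ q ≤ (ball x s).indicator (fun _ => ENNReal.ofReal s ^ q) y := by
  unfold cutoff
  by_cases hy : y ∈ ball x s
  · rw [indicator_of_mem hy]
    rw [mem_ball'] at hy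
    gcongr
    exact max_le (by linarith [dist_nonneg (x := x) (y := y)]) (dist_nonneg.trans_lt hy).le
  · rw [mem_ball', not_lt] at hy
    simp [indicator_of_notMem (mem_ball'.not.mpr hy.not_gt),
      max_eq_right (sub_nonpos.mpr hy), hq]

variable [MeasurableSpace X] [OpensMeasurableSpace X] (μ : Measure X)

theorem ofReal_rpow_mul_measure_ball_le_lintegral_cutoff (hq : 0 ≤ q) :
    ENNReal.ofReal (s / 2) ^ q * μ (ball x (s / 2)) ≤ ∫⁻ y, cutoff x s y ^ q ∂μ := by
  rw [← lintegral_indicator_const measurableSet_ball]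
  exact lintegral_mono (indicator_le_cutoff_rpow hq)

theorem lintegral_mul_cutoff_rpow_le (f : X → ℝ≥0∞) (hq : 0 < q) :
    ∫⁻ y, f y * cutoff x s y ^ q ∂μ
      ≤ ENNReal.ofReal s ^ q * ∫⁻ y in ball x s, f y ∂μ := by
  rw [← lintegral_const_mul' _ _ (ENNReal.rpow_ne_top_of_nonneg hq.le ENNReal.ofReal_ne_top),
    ← lintegral_indicator measurableSet_ball]
  refine lintegral_mono fun y => ?_
  calc f y * cutoff x s y ^ q ≤ f y * (ball x s).indicator (fun _ => ENNReal.ofReal s ^ q) y := by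
        gcongr; exact cutoff_rpow_le_indicator hq y
    _ = _ := by by_cases hy : y ∈ ball x s <;> simp [hy, mul_comm]

theorem lintegral_cutoff_rpow_le (hq : 0 < q) :
    ∫⁻ y, cutoff x s y ^ q ∂μ ≤ ENNReal.ofReal s ^ q * μ (ball x s) := by
  simpa using lintegral_mul_cutoff_rpow_le μ 1 hq

end Cutoff

section Sobolev

variable {X : Type*} [MetricSpace X] [MeasurableSpace X] {μ : Measure X} {n : ℕ} {A B κ s : ℝ}
  {R : X → ℝ} {x : X}

theorem setLIntegral_le_of_setLIntegral_rpow_le (hn : 3 ≤ n) (hκ : 0 < κ) (hs : 0 < s)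
    (hR : Measurable R) (hball : μ (ball x s) ≤ ENNReal.ofReal (κ * s ^ n))
    (hJ : ∫⁻ y in ball x s, ENNReal.ofReal (R y) ^ (((n : ℝ) - 1) / 2) ∂μ
      ≤ ENNReal.ofReal (κ * s)) :
    ∫⁻ y in ball x s, ENNReal.ofReal (R y) ∂μ
      ≤ ENNReal.ofReal (κ * s ^ ((n : ℝ) - 2)) := by
  have hn' : (3 : ℝ) ≤ n := by exact_mod_cast hn
  set p : ℝ := ((n : ℝ) - 1) / 2
  have hp : 1 ≤ p := by rw [le_div_iff₀ two_pos]; linarith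
  have hp' : 1 / p ≤ 1 := by rw [div_le_one (by linarith)]; exact hp
  calc _ ≤ _ := setLIntegral_le_rpow_mul_measure_rpow μ hR.ennreal_ofReal.aemeasurable hp
    _ ≤ ENNReal.ofReal (κ * s) ^ (1 / p) * ENNReal.ofReal (κ * s ^ n) ^ (1 - 1 / p) := by
        gcongr
    _ = ENNReal.ofReal (κ * s ^ ((n : ℝ) - 2)) := by
        rw [ENNReal.ofReal_rpow_of_nonneg (by positivity) (by positivity),
          ENNReal.ofReal_rpow_of_nonneg (by positivity) (sub_nonneg.mpr hp'),
          ← ENNReal.ofReal_mul (by positivity), mul_rpow_mul_mul_pow_rpow hκ hs]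
        congr 3
        field_simp
        ring

variable [OpensMeasurableSpace X]

theorem sobolev_rhs_le (hA : 0 < A) (hB : 0 ≤ B) (hκ : 0 ≤ κ) (hs : s ∈ Ioc (0 : ℝ) 1)
    (hball : μ (ball x s) ≤ ENNReal.ofReal (κ * s ^ n))
    (hI : ∫⁻ y in ball x s, ENNReal.ofReal (R y) ∂μ
      ≤ ENNReal.ofReal (κ * s ^ ((n : ℝ) - 2))) :
    ENNReal.ofReal A
          * (4 * μ (ball x s) + ∫⁻ y, ENNReal.ofReal (R y) * cutoff x s y ^ (2 : ℝ) ∂μ)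
        + ENNReal.ofReal B * ∫⁻ y, cutoff x s y ^ (2 : ℝ) ∂μ
      ≤ ENNReal.ofReal ((5 * A + B) * (κ * s ^ n)) := by
  obtain ⟨hs₀, hs₁⟩ := hs
  set M := ENNReal.ofReal (κ * s ^ n) with hM
  have hRv : ∫⁻ y, ENNReal.ofReal (R y) * cutoff x s y ^ (2 : ℝ) ∂μ ≤ M :=
    calc _ ≤ _ := lintegral_mul_cutoff_rpow_le μ (fun y => ENNReal.ofReal (R y)) two_pos
      _ ≤ ENNReal.ofReal s ^ (2 : ℝ) * ENNReal.ofReal (κ * s ^ ((n : ℝ) - 2)) := by gcongr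
      _ = M := by
        rw [hM, ENNReal.ofReal_rpow_of_nonneg hs₀.le zero_le_two,
          ← ENNReal.ofReal_mul (by positivity), ← Real.rpow_natCast, mul_left_comm,
          ← Real.rpow_add hs₀, add_sub_cancel]
  have hv : ∫⁻ y, cutoff x s y ^ (2 : ℝ) ∂μ ≤ M :=
    calc _ ≤ _ := lintegral_cutoff_rpow_le μ two_pos
      _ ≤ ENNReal.ofReal s ^ (2 : ℝ) * M := by gcongr
      _ ≤ 1 * M := by
        gcongr
        exact ENNReal.rpow_le_one (ENNReal.ofReal_le_one.mpr hs₁) zero_le_two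
      _ = M := one_mul M
  calc _ ≤ ENNReal.ofReal A * (4 * M + M) + ENNReal.ofReal B * M := by gcongr
    _ = _ := by
        rw [hM, ← ENNReal.ofReal_ofNat 4, ← ENNReal.ofReal_mul (by norm_num),
          ← ENNReal.ofReal_add (by positivity) (by positivity), ← ENNReal.ofReal_mul hA.le,
          ← ENNReal.ofReal_mul hB, ← ENNReal.ofReal_add (by positivity) (by positivity)]
        ring_nf

theorem le_sobolev_lhs (hn : 2 < n) (hκ : 0 < κ) (hs : 0 < s)
    (hhalf : ENNReal.ofReal (κ * (s / 2) ^ n) ≤ μ (ball x (s / 2))) :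
    ENNReal.ofReal (κ ^ (((n : ℝ) - 2) / n) * (s / 2) ^ n)
      ≤ (∫⁻ y, cutoff x s y ^ (2 * (n : ℝ) / ((n : ℝ) - 2)) ∂μ)
          ^ (((n : ℝ) - 2) / n) := by
  have hn₂ : (0 : ℝ) < n - 2 := by
    have : (2 : ℝ) < n := by exact_mod_cast hn
    linarith
  set e : ℝ := ((n : ℝ) - 2) / n
  set q : ℝ := 2 * (n : ℝ) / ((n : ℝ) - 2)
  have he : 0 ≤ e := by positivity
  have hq : 0 ≤ q := by positivity
  calc ENNReal.ofReal (κ ^ e * (s / 2) ^ n)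
      = (ENNReal.ofReal (s / 2) ^ q * ENNReal.ofReal (κ * (s / 2) ^ n)) ^ e := by
        rw [ENNReal.ofReal_rpow_of_nonneg (by positivity) hq,
          ← ENNReal.ofReal_mul (by positivity), ENNReal.ofReal_rpow_of_nonneg (by positivity) he,
          rpow_mul_mul_pow_rpow hκ (half_pos hs)] <;> simp only [q, e] <;> field_simp
    _ ≤ (ENNReal.ofReal (s / 2) ^ q * μ (ball x (s / 2))) ^ e := by gcongr
    _ ≤ _ := by
        gcongr
        exact ofReal_rpow_mul_measure_ball_le_lintegral_cutoff μ hq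

theorem ofReal_mul_le_setLIntegral_of_sobolevAt (hn : 3 ≤ n) (hA : 0 < A) (hB : 0 ≤ B)
    (hκ : 0 < κ) (hsmall : 2 ^ n * (5 * A + B) * κ ^ (2 / n : ℝ) < 1) (hR : Measurable R)
    (hSob : SobolevAt μ n A B R x 1) (hs : s ∈ Ioc (0 : ℝ) 1)
    (hball : μ (ball x s) ≤ ENNReal.ofReal (κ * s ^ n))
    (hhalf : ENNReal.ofReal (κ * (s / 2) ^ n) ≤ μ (ball x (s / 2))) :
    ENNReal.ofReal (κ * s)
      ≤ ∫⁻ y in ball x s, ENNReal.ofReal (R y) ^ (((n : ℝ) - 1) / 2) ∂μ := by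
  obtain ⟨hs₀, hs₁⟩ := hs
  by_contra! hJ
  have hI := setLIntegral_le_of_setLIntegral_rpow_le hn hκ hs₀ hR hball hJ.le
  have hSob_s := (le_sobolev_lhs hn hκ hs₀ hhalf).trans ((hSob s ⟨hs₀, hs₁⟩).trans
    (sobolev_rhs_le hA hB hκ.le ⟨hs₀, hs₁⟩ hball hI))
  rw [ENNReal.ofReal_le_ofReal_iff (by positivity)] at hSob_s
  exact hSob_s.not_gt (mul_mul_pow_lt_rpow_mul_half_pow (by omega) hκ hs₀ hsmall)

end Sobolev

theorem exists_scale_measure_ball_le_and_half_ge {X : Type*} [MetricSpace X] [MeasurableSpace X]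
    {μ : Measure X} {x : X} {n : ℕ} {κ ω : ℝ}
    (hdens : Tendsto (fun ρ : ℝ => (μ (ball x ρ)).toReal / ρ ^ n) (𝓝[>] 0) (𝓝 ω))
    (hκω : κ < ω) (h₁ : μ (ball x 1) < ENNReal.ofReal κ) :
    ∃ s ∈ Ioc (0 : ℝ) 1, μ (ball x s) ≤ ENNReal.ofReal (κ * s ^ n)
      ∧ ENNReal.ofReal (κ * (s / 2) ^ n) ≤ μ (ball x (s / 2)) := by
  let P : ℕ → Prop := fun k =>
    ENNReal.ofReal (κ * ((1 / 2 : ℝ) ^ k) ^ n) ≤ μ (ball x ((1 / 2) ^ k))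
  have hP₀ : ¬ P 0 := by simpa [P] using h₁
  have hP : ∃ k, P k := by
    have hev : ∀ᶠ ρ in 𝓝[>] (0 : ℝ), 0 < ρ ∧ κ < (μ (ball x ρ)).toReal / ρ ^ n :=
      (eventually_mem_nhdsWithin (a := 0) (s := Ioi 0)).and
        (hdens.eventually (eventually_gt_nhds hκω))
    obtain ⟨k, hρ, hk⟩ := ((tendsto_pow_atTop_nhdsWithin_zero_of_lt_one
      (by norm_num : (0 : ℝ) < 1 / 2) (by norm_num)).eventually hev).exists
    refine ⟨k, ENNReal.ofReal_le_of_le_toReal ?_⟩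
    exact ((lt_div_iff₀ (pow_pos hρ n)).mp hk).le
  obtain ⟨k, hk, hk₁⟩ := Nat.exists_not_and_succ_of_not_zero_of_exists hP₀ hP
  refine ⟨(1 / 2) ^ k, ⟨by positivity, pow_le_one₀ (by norm_num) (by norm_num)⟩,
    (not_le.mp hk).le, ?_⟩
  have hhalf : (1 / 2 : ℝ) ^ k / 2 = (1 / 2) ^ (k + 1) := by ring
  simpa only [hhalf] using hk₁

theorem exists_radius_ofReal_mul_le_measure_add_setLIntegral {X : Type*} [MetricSpace X]
    [MeasurableSpace X] [OpensMeasurableSpace X] {μ : Measure X} {n : ℕ} (hn : 3 ≤ n)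
    {A B κ ω : ℝ} {R : X → ℝ} {x : X}
    (hdens : Tendsto (fun ρ : ℝ => (μ (ball x ρ)).toReal / ρ ^ n) (𝓝[>] 0) (𝓝 ω))
    (hκω : κ < ω) (hA : 0 < A) (hB : 0 ≤ B) (hκ : 0 < κ)
    (hsmall : 2 ^ n * (5 * A + B) * κ ^ (2 / n : ℝ) < 1) (hR : Measurable R)
    (hSob : SobolevAt μ n A B R x 1) :
    ∃ r ∈ Ioc (0 : ℝ) 1, ENNReal.ofReal (κ * r)
      ≤ μ (ball x r)
        + ∫⁻ y in ball x r, ENNReal.ofReal (R y) ^ (((n : ℝ) - 1) / 2) ∂μ := by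
  by_cases h₁ : ENNReal.ofReal κ ≤ μ (ball x 1)
  · exact ⟨1, ⟨one_pos, le_rfl⟩, by simpa using le_add_right h₁⟩
  obtain ⟨s, hs, hball, hhalf⟩ :=
    exists_scale_measure_ball_le_and_half_ge hdens hκω (not_le.mp h₁)
  exact ⟨s, hs, le_add_left
    (ofReal_mul_le_setLIntegral_of_sobolevAt hn hA hB hκ hsmall hR hSob hs hball hhalf)⟩

theorem exists_countable_pairwiseDisjoint_closedBall_volume_le_tsum (S : Set ℝ) {r : ℝ → ℝ}
    {ρ : ℝ} (hr₀ : ∀ t ∈ S, 0 < r t) (hr₁ : ∀ t ∈ S, r t ≤ ρ) :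
    ∃ u ⊆ S, u.Countable ∧ u.PairwiseDisjoint (fun t => closedBall t (r t))
      ∧ volume S ≤ ∑' t : u, ENNReal.ofReal (8 * r t) := by
  obtain ⟨u, hu_sub, hu_disj, hu_cov⟩ :=
    Vitali.exists_disjoint_subfamily_covering_enlargement_closedBall S id r ρ hr₁ 4 (by norm_num)
  have hu_cnt : u.Countable := hu_disj.countable_of_nonempty_interior fun t ht => by
    rw [id, interior_closedBall t (hr₀ t (hu_sub ht)).ne']
    exact nonempty_ball.mpr (hr₀ t (hu_sub ht))
  refine ⟨u, hu_sub, hu_cnt, hu_disj, ?_⟩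
  calc volume S ≤ volume (⋃ t ∈ u, closedBall t (4 * r t)) := measure_mono fun a ha => by
        obtain ⟨b, hb, hsub⟩ := hu_cov a ha
        exact mem_biUnion hb (hsub (mem_closedBall_self (hr₀ a ha).le))
    _ ≤ ∑' t : u, volume (closedBall (t : ℝ) (4 * r t)) := measure_biUnion_le volume hu_cnt _
    _ = ∑' t : u, ENNReal.ofReal (8 * r t) := by simp_rw [Real.volume_closedBall]; ring_nf

theorem ofReal_mul_div_le_measure_univ_of_isometry_on_Icc {X : Type*} [MetricSpace X]
    [MeasurableSpace X] [OpensMeasurableSpace X] (ν : Measure X) {γ : ℝ → X} {L κ ρ : ℝ}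
    (hκ : 0 ≤ κ) (hγ : ∀ s ∈ Icc 0 L, ∀ t ∈ Icc 0 L, dist (γ s) (γ t) = |s - t|)
    {r : X → ℝ} (hr₀ : ∀ x, 0 < r x) (hr₁ : ∀ x, r x ≤ ρ)
    (hmass : ∀ x, ENNReal.ofReal (κ * r x) ≤ ν (ball x (r x))) :
    ENNReal.ofReal (κ * L / 8) ≤ ν univ := by
  obtain ⟨u, hu_sub, hu_cnt, hu_disj, hlen⟩ :=
    exists_countable_pairwiseDisjoint_closedBall_volume_le_tsum (Icc 0 L) (r := r ∘ γ)
      (fun t _ => hr₀ _) (fun t _ => hr₁ _)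
  have hdisj : u.PairwiseDisjoint fun t => ball (γ t) (r (γ t)) := fun b hb c hc hbc => by
    have hgap :=
      (disjoint_closedBall_closedBall_iff (hr₀ _).le (hr₀ _).le).mp (hu_disj hb hc hbc)
    refine ball_disjoint_ball ?_
    rw [hγ b (hu_sub hb) c (hu_sub hc), ← Real.dist_eq]
    exact hgap.le
  calc ENNReal.ofReal (κ * L / 8) = ENNReal.ofReal (κ / 8) * volume (Icc 0 L) := by
        rw [Real.volume_Icc, ← ENNReal.ofReal_mul (by positivity)]; ring_nf
    _ ≤ ENNReal.ofReal (κ / 8) * ∑' t : u, ENNReal.ofReal (8 * r (γ t)) := by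
        gcongr; exact hlen
    _ = ∑' t : u, ENNReal.ofReal (κ * r (γ t)) := by
        rw [← ENNReal.tsum_mul_left]
        congr 1 with t
        rw [← ENNReal.ofReal_mul (by positivity)]
        ring_nf
    _ ≤ ∑' t : u, ν (ball (γ t) (r (γ t))) := ENNReal.tsum_le_tsum fun t => hmass _
    _ = ν (⋃ t ∈ u, ball (γ t) (r (γ t))) :=
        (measure_biUnion hu_cnt hdisj fun _ _ => measurableSet_ball).symm
    _ ≤ ν univ := measure_mono (subset_univ _)

theorem ofReal_le_ofReal_mul_of_ofReal_le_add {L κ : ℝ} {m J : ℝ≥0∞} (hκ : 0 < κ)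
    (hm : m ≠ ⊤) (hL : 16 * (1 + m.toReal / κ) ≤ L)
    (h : ENNReal.ofReal (κ * L / 8) ≤ m + J) :
    ENNReal.ofReal L ≤ ENNReal.ofReal (16 * κ⁻¹) * J := by
  have hmκ : 0 ≤ m.toReal / κ := by positivity
  have hL₀ : 0 ≤ κ * L / 16 := by nlinarith
  have hm' : m ≤ ENNReal.ofReal (κ * L / 16) := by
    rw [← ENNReal.ofReal_toReal hm]
    refine ENNReal.ofReal_le_ofReal ?_
    have : m.toReal = κ * (m.toReal / κ) := by field_simp
    nlinarith
  have hJ : ENNReal.ofReal (κ * L / 16) ≤ J := by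
    rw [← ENNReal.add_le_add_iff_left ENNReal.ofReal_ne_top, ← ENNReal.ofReal_add hL₀ hL₀]
    calc ENNReal.ofReal (κ * L / 16 + κ * L / 16) = ENNReal.ofReal (κ * L / 8) := by ring_nf
      _ ≤ m + J := h
      _ ≤ _ := by gcongr
  calc ENNReal.ofReal L = ENNReal.ofReal (16 * κ⁻¹) * ENNReal.ofReal (κ * L / 16) := by
        rw [← ENNReal.ofReal_mul (by positivity)]; field_simp
    _ ≤ _ := by gcongr

theorem unitBallVol_pos (n : ℕ) : 0 < unitBallVol n :=
  ENNReal.toReal_pos (measure_ball_pos _ _ one_pos).ne' measure_ball_lt_top.ne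

theorem exists_dist_eq_diam_univ (X : Type*) [MetricSpace X] [CompactSpace X] [Nonempty X] :
    ∃ a b : X, dist a b = diam (univ : Set X) := by
  obtain ⟨p, -, hp⟩ := (isCompact_univ (X := X × X)).exists_isMaxOn univ_nonempty
    continuous_dist.continuousOn
  refine ⟨p.1, p.2, le_antisymm
    (dist_le_diam_of_mem isCompact_univ.isBounded trivial trivial) ?_⟩
  exact diam_le_of_forall_dist_le dist_nonneg fun a _ b _ => hp (mem_univ (a, b))

/-- Dichotomy form of the diameter bound: with
`κ₀ = min ((2ⁿ(48A+4B))^{-n/2}) (ωₙ/2)`, if `diam(X) ≥ C₀ (1 + μ(X)/κ₀)` then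
`diam(X) ≤ C₀ κ₀⁻¹ ∫ R^{(n-1)/2}`. -/
theorem diameter_dichotomy (n : ℕ) (hn : 3 ≤ n) :
    ∃ C₀ : ℝ, 0 < C₀ ∧
      ∀ (X : Type) [MetricSpace X] [CompactSpace X] [MeasurableSpace X] [BorelSpace X]
        (μ : Measure X) [IsFiniteMeasure μ] (A B : ℝ) (R : X → ℝ),
        (∀ x : X, Tendsto (fun ρ : ℝ => (μ (Metric.ball x ρ)).toReal / ρ ^ n)
            (nhdsWithin 0 (Set.Ioi 0)) (nhds (unitBallVol n))) →
        (∀ x : X, ContinuousOn (fun ρ : ℝ => (μ (Metric.ball x ρ)).toReal)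
            (Set.Ioi (0 : ℝ))) →
        (∀ a b : X, ∃ γ : ℝ → X, γ 0 = a ∧ γ (dist a b) = b ∧
            ∀ s ∈ Set.Icc (0 : ℝ) (dist a b), ∀ t ∈ Set.Icc (0 : ℝ) (dist a b),
              dist (γ s) (γ t) = |s - t|) →
        0 < A → 0 ≤ B → Measurable R → (∀ y, 0 ≤ R y) →
        (∀ x : X, SobolevAt μ n A B R x 1) →
        ∀ κ₀ : ℝ,
          κ₀ = min ((2 ^ n * (48 * A + 4 * B)) ^ (-(n : ℝ) / 2)) (unitBallVol n / 2) →
          Metric.diam (Set.univ : Set X) ≥ C₀ * (1 + (μ Set.univ).toReal / κ₀) →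
          ENNReal.ofReal (Metric.diam (Set.univ : Set X))
            ≤ ENNReal.ofReal (C₀ * κ₀⁻¹) *
                ∫⁻ y, ENNReal.ofReal (R y) ^ (((n : ℝ) - 1) / 2) ∂μ := by
  refine ⟨16, by norm_num,
    fun X _ _ _ _ μ _ A B R hdens _ hgeo hA hB hR _ hSob κ hκ hdiam => ?_⟩
  rcases isEmpty_or_nonempty X with hX | hX
  · simp [univ_eq_empty_iff.mpr hX]
  have hκ₀ : 0 < κ := hκ ▸ lt_min (by positivity) (half_pos (unitBallVol_pos n))
  have hκω : κ < unitBallVol n :=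
    (hκ ▸ min_le_right _ _).trans_lt (half_lt_self (unitBallVol_pos n))
  have hsmall := two_pow_mul_rpow_lt_one (by omega) hA hB hκ₀ (hκ ▸ min_le_left _ _)
  choose r hr hmass using fun x => exists_radius_ofReal_mul_le_measure_add_setLIntegral hn
    (hdens x) hκω hA hB hκ₀ hsmall hR (hSob x)
  set ν := μ + μ.withDensity fun y => ENNReal.ofReal (R y) ^ (((n : ℝ) - 1) / 2)
  have hν : ∀ s, MeasurableSet s →
      ν s = μ s + ∫⁻ y in s, ENNReal.ofReal (R y) ^ (((n : ℝ) - 1) / 2) ∂μ := by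
    intro s hs
    simp only [ν, Measure.add_apply, withDensity_apply _ hs]
  obtain ⟨a, b, hab⟩ := exists_dist_eq_diam_univ X
  obtain ⟨γ, -, -, hγ⟩ := hgeo a b
  have hνX := ofReal_mul_div_le_measure_univ_of_isometry_on_Icc ν hκ₀.le hγ
    (fun x => (hr x).1) (fun x => (hr x).2) fun x => (hν _ measurableSet_ball).symm ▸ hmass x
  rw [hab, hν _ MeasurableSet.univ, Measure.restrict_univ] at hνX
  exact ofReal_le_ofReal_mul_of_ofReal_le_add hκ₀ (measure_ne_top μ univ) hdiam hνX
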